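/- arXiv:1801.05695 — 2 statements merged into one kernel-verified Lean document; each statement's English description precedes it below -/
import Mathlib

section
/- If R > 1, U ≥ 2, and s(u) > 0, t(u) > 0 for all u, then ∏_{u=1}^{U} (s(u)/R + t(u)) − ∏_{u=1}^{U} t(u) < (1/R) [ ∏_{u=1}^{U} (s(u) + t(u)) − ∏_{u=1}^{U} t(u) ]. -/
/-!
Expanding `∏ u (c s u + t u)` over the subsets `A` of the index set gives
`∑_A c^|A| (∏_{u ∈ A} s u) (∏_{u ∉ A} t u)`. Subtracting `∏ t`, which is the term `A = ∅`,
leaves only subsets with `|A| ≥ 1`, where `c^|A| ≤ c` for `0 < c < 1`; the inequality is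
strict for `A` the whole index set as soon as it has at least two elements. Take `c = 1/R`.
-/

open Finset

section

variable {ι K : Type*} [CommRing K]

theorem prod_mul_add_sub_prod_eq_sum_powerset_erase_empty [DecidableEq ι]
    (S : Finset ι) (c : K) (s t : ι → K) :
    ∏ u ∈ S, (c * s u + t u) - ∏ u ∈ S, t u =
      ∑ A ∈ S.powerset.erase ∅, c ^ #A * ((∏ u ∈ A, s u) * ∏ u ∈ S \ A, t u) := by
  rw [prod_add, ← add_sum_erase _ _ (empty_mem_powerset S)]
  simp only [prod_empty, sdiff_empty, one_mul, add_sub_cancel_left, prod_mul_distrib,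
    prod_const, mul_assoc, card_empty, pow_zero]

theorem prod_mul_add_sub_prod_lt [LinearOrder K] [IsStrictOrderedRing K]
    {S : Finset ι} {c : K} {s t : ι → K} (hS : 1 < #S) (hc₀ : 0 < c) (hc₁ : c < 1)
    (hs : ∀ u ∈ S, 0 < s u) (ht : ∀ u ∈ S, 0 ≤ t u) :
    ∏ u ∈ S, (c * s u + t u) - ∏ u ∈ S, t u <
      c * (∏ u ∈ S, (s u + t u) - ∏ u ∈ S, t u) := by
  classical
  have h := prod_mul_add_sub_prod_eq_sum_powerset_erase_empty S 1 s t
  simp only [one_mul, one_pow] at h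
  rw [prod_mul_add_sub_prod_eq_sum_powerset_erase_empty, h, mul_sum]
  have hterm_nonneg : ∀ A ∈ S.powerset, 0 ≤ (∏ u ∈ A, s u) * ∏ u ∈ S \ A, t u :=
    fun A hA => mul_nonneg (prod_nonneg fun u hu => (hs u (mem_powerset.mp hA hu)).le)
      (prod_nonneg fun u hu => ht u (mem_sdiff.mp hu).1)
  refine sum_lt_sum (fun A hA => ?_) ⟨S, ?_, ?_⟩
  · obtain ⟨hA_ne, hA⟩ := mem_erase.mp hA
    have hcard : #A ≠ 0 := card_ne_zero.mpr (nonempty_iff_ne_empty.mpr hA_ne)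
    exact mul_le_mul_of_nonneg_right (pow_le_of_le_one hc₀.le hc₁.le hcard)
      (hterm_nonneg A hA)
  · exact mem_erase.mpr ⟨nonempty_iff_ne_empty.mp (card_pos.mp (by omega)),
      mem_powerset_self S⟩
  · rw [sdiff_self, bot_eq_empty, prod_empty, mul_one]
    exact mul_lt_mul_of_pos_right (pow_lt_self_of_lt_one₀ hc₀ hc₁ hS) (prod_pos hs)

end

/-- If `R > 1`, `U ≥ 2`, and `s(u) > 0`, `t(u) > 0` for all `u`, then
`∏_u (s(u)/R + t(u)) − ∏_u t(u) < (1/R)[ ∏_u (s(u) + t(u)) − ∏_u t(u) ]`. -/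
theorem prod_div_variance_lt
    (U : ℕ) (hU : 2 ≤ U) (R : ℝ) (hR : 1 < R) (s t : Fin U → ℝ)
    (hs : ∀ u, 0 < s u) (ht : ∀ u, 0 < t u) :
    ∏ u, (s u / R + t u) - ∏ u, t u <
      (1 / R) * (∏ u, (s u + t u) - ∏ u, t u) := by
  simp_rw [div_eq_inv_mul, mul_one]
  exact prod_mul_add_sub_prod_lt (by simp; omega) (inv_pos.mpr (one_pos.trans hR))
    (inv_lt_one_of_one_lt₀ hR)
    (fun u _ => hs u) (fun u _ => (ht u).le)
end

section
/- If R ≥ 2, U ≥ 2, and v(u) > 0 and ℓ(u) > 0 for all u, then the estimator L̂ = ∏_{u=1}^{U} [ (1/R) ∑_{r=1}^{R} L(u,r) ] has strictly smaller variance than the estimator L̃ = (1/R) ∑_{r=1}^{R} ∏_{u=1}^{U} L(u,r): Var[L̂] < Var[L̃]. -/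
/-!
Blocks of an independent family are independent, so the unit averages `M u = R⁻¹ ∑ r L(u,r)`
are independent, and so are the replication products `P r = ∏ u L(u,r)`. For independent
square-integrable factors `Var[∏ X] = ∏ E[X²] - ∏ E[X]²`, which gives, with `a u = ℓ(u)²` and
`b u = v(u)/R`,
  `Var[L̂] = ∏ (a + b) - ∏ a`  and  `Var[L̃] = (∏ (a + R b) - ∏ a) / R`.
The polynomial `t ↦ ∏ (a + t b) - ∏ a` has nonnegative coefficients, no constant term and a
positive leading coefficient `∏ b` of degree `U ≥ 2`, so it is strictly superlinear on `t > 1`.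
-/

open MeasureTheory ProbabilityTheory

section ProductInequality

variable {ι : Type*} {a b : ι → ℝ} {t : ℝ}

theorem mul_prod_add_sub_prod_le (ha : ∀ i, 0 ≤ a i) (hb : ∀ i, 0 ≤ b i) (ht : 1 ≤ t)
    (s : Finset ι) :
    t * (∏ i ∈ s, (a i + b i) - ∏ i ∈ s, a i) ≤ ∏ i ∈ s, (a i + t * b i) - ∏ i ∈ s, a i := by
  classical
  induction s using Finset.induction_on with
  | empty => simp
  | insert x s hx ih =>
    have hle : ∏ i ∈ s, (a i + b i) ≤ ∏ i ∈ s, (a i + t * b i) :=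
      Finset.prod_le_prod (fun i _ ↦ add_nonneg (ha i) (hb i)) fun i _ ↦ by nlinarith [hb i]
    simp only [Finset.prod_insert hx]
    nlinarith [mul_le_mul_of_nonneg_left ih (ha x), mul_le_mul_of_nonneg_left hle
      (mul_nonneg (by linarith : (0:ℝ) ≤ t) (hb x))]

theorem mul_prod_add_sub_prod_lt (ha : ∀ i, 0 ≤ a i) (hb : ∀ i, 0 < b i) (ht : 1 < t)
    {s : Finset ι} (hs : 1 < s.card) :
    t * (∏ i ∈ s, (a i + b i) - ∏ i ∈ s, a i) < ∏ i ∈ s, (a i + t * b i) - ∏ i ∈ s, a i := by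
  classical
  obtain ⟨x, hx⟩ := Finset.card_pos.1 (by omega : 0 < s.card)
  have hne : (s.erase x).Nonempty := by
    rw [← Finset.card_pos, Finset.card_erase_of_mem hx]; omega
  have hlt : ∏ i ∈ s.erase x, (a i + b i) < ∏ i ∈ s.erase x, (a i + t * b i) :=
    Finset.prod_lt_prod_of_nonempty (fun i _ ↦ by linarith [ha i, hb i])
      (fun i _ ↦ by nlinarith [hb i]) hne
  have hle := mul_prod_add_sub_prod_le ha (fun i ↦ (hb i).le) ht.le (s.erase x)
  rw [← Finset.insert_erase hx]
  simp only [Finset.prod_insert (Finset.notMem_erase x s)]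
  nlinarith [mul_le_mul_of_nonneg_left hle (ha x), mul_lt_mul_of_pos_left hlt
    (mul_pos (by linarith : (0:ℝ) < t) (hb x))]

end ProductInequality

namespace ProbabilityTheory

variable {Ω : Type*} [MeasurableSpace Ω] {μ : Measure Ω}

theorem iIndepFun.curry {ι κ 𝓧 : Type*} [MeasurableSpace 𝓧] {X : ι × κ → Ω → 𝓧}
    (mX : AEMeasurable (fun ω p ↦ X p ω) μ) (h : iIndepFun X μ) :
    iIndepFun (fun i ω j ↦ X (i, j) ω) μ := by
  have := h.isProbabilityMeasure
  have _ p := Measure.isProbabilityMeasure_map (mX.eval p)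
  have mcurry : AEMeasurable (fun ω i j ↦ X (i, j) ω) μ :=
    (MeasurableEquiv.curry ι κ 𝓧).measurable.comp_aemeasurable mX
  rw [iIndepFun_iff_map_fun_eq_infinitePi_map₀ mcurry]
  calc μ.map (fun ω i j ↦ X (i, j) ω)
      = (μ.map fun ω p ↦ X p ω).map (MeasurableEquiv.curry ι κ 𝓧) :=
        (AEMeasurable.map_map_of_aemeasurable
          (MeasurableEquiv.curry ι κ 𝓧).measurable.aemeasurable mX).symm
    _ = (Measure.infinitePi fun p ↦ μ.map (X p)).map (MeasurableEquiv.curry ι κ 𝓧) := by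
        rw [h.map_fun_eq_infinitePi_map₀ mX]
    _ = Measure.infinitePi fun i ↦ Measure.infinitePi fun j ↦ μ.map (X (i, j)) :=
        Measure.infinitePi_map_curry fun i j ↦ μ.map (X (i, j))
    _ = Measure.infinitePi fun i ↦ μ.map (fun ω j ↦ X (i, j) ω) := by
        congr with i : 1
        exact ((h.precomp (Prod.mk_right_injective i)).map_fun_eq_infinitePi_map₀
          ((measurable_pi_lambda _ fun j ↦ measurable_pi_apply (i, j)).comp_aemeasurable mX)).symm

theorem iIndepFun.integrable_finsetProd {ι : Type*} {X : ι → Ω → ℝ} (h : iIndepFun X μ)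
    (hX : ∀ i, Integrable (X i) μ) (s : Finset ι) : Integrable (∏ i ∈ s, X i) μ := by
  classical
  have := h.isProbabilityMeasure
  induction s using Finset.induction_on with
  | empty => exact integrable_const (1 : ℝ)
  | insert i s hi ih =>
    rw [Finset.prod_insert hi]
    exact (h.indepFun_finsetProd_of_notMem₀ (fun i ↦ (hX i).aemeasurable) hi).symm.integrable_mul
      (hX i) ih

theorem iIndepFun.memLp_two_fun_prod {ι : Type*} [Fintype ι] {X : ι → Ω → ℝ} (h : iIndepFun X μ)
    (hX : ∀ i, MemLp (X i) 2 μ) : MemLp (fun ω ↦ ∏ i, X i ω) 2 μ := by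
  refine (memLp_two_iff_integrable_sq ?_).2 ?_
  · exact Finset.aestronglyMeasurable_fun_prod _ fun i _ ↦ (hX i).aestronglyMeasurable
  · convert (h.comp (fun _ x ↦ x ^ 2) fun _ ↦ measurable_id.pow_const 2).integrable_finsetProd
      (fun i ↦ (hX i).integrable_sq) Finset.univ using 1
    ext ω
    simp [Finset.prod_pow]

theorem iIndepFun.variance_fun_prod {ι : Type*} [Fintype ι] {X : ι → Ω → ℝ} (h : iIndepFun X μ)
    (hX : ∀ i, MemLp (X i) 2 μ) :
    Var[fun ω ↦ ∏ i, X i ω; μ] = ∏ i, (Var[X i; μ] + μ[X i] ^ 2) - ∏ i, μ[X i] ^ 2 := by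
  have := h.isProbabilityMeasure
  have hsq : iIndepFun (fun i ω ↦ X i ω ^ 2) μ :=
    h.comp (fun _ x ↦ x ^ 2) fun _ ↦ measurable_id.pow_const 2
  rw [variance_eq_sub (h.memLp_two_fun_prod hX)]
  simp only [Pi.pow_apply, ← Finset.prod_pow]
  rw [hsq.integral_fun_prod_eq_prod_integral fun i ↦ ((hX i).aestronglyMeasurable.pow 2),
    h.integral_fun_prod_eq_prod_integral fun i ↦ (hX i).aestronglyMeasurable, ← Finset.prod_pow]
  congr 1
  refine Finset.prod_congr rfl fun i _ ↦ ?_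
  rw [variance_eq_sub (hX i), Pi.pow_def]
  ring

theorem iIndepFun.variance_const_mul_sum {ι : Type*} {X : ι → Ω → ℝ} (h : iIndepFun X μ)
    (hX : ∀ i, MemLp (X i) 2 μ) (c : ℝ) (s : Finset ι) :
    Var[fun ω ↦ c * ∑ i ∈ s, X i ω; μ] = c ^ 2 * ∑ i ∈ s, Var[X i; μ] := by
  rw [variance_const_mul, ← IndepFun.variance_sum (fun i _ ↦ hX i)
    fun i _ j _ hij ↦ h.indepFun hij, Finset.sum_fn]

section Estimators

variable {ι κ : Type*} [Fintype ι] [Fintype κ]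
  {L : ι × κ → Ω → ℝ} {ℓ v : ι → ℝ}

theorem iIndepFun.variance_prod_average [Nonempty κ] (hL : iIndepFun L μ)
    (hL2 : ∀ p, MemLp (L p) 2 μ)
    (hmean : ∀ p, μ[L p] = ℓ p.1) (hvar : ∀ p, Var[L p; μ] = v p.1) :
    Var[fun ω ↦ ∏ i, (1 / (Fintype.card κ : ℝ) * ∑ j, L (i, j) ω); μ] =
      ∏ i, (ℓ i ^ 2 + v i / Fintype.card κ) - ∏ i, ℓ i ^ 2 := by
  have := hL.isProbabilityMeasure
  set n : ℝ := (Fintype.card κ : ℝ)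
  set M : ι → Ω → ℝ := fun i ω ↦ 1 / n * ∑ j, L (i, j) ω
  have hM : iIndepFun M μ :=
    (hL.curry (aemeasurable_pi_iff.2 fun p ↦ (hL2 p).aestronglyMeasurable.aemeasurable)).comp
      (fun _ x ↦ 1 / n * ∑ j, x j) fun _ ↦ by fun_prop
  have hM2 (i : ι) : MemLp (M i) 2 μ := (memLp_finsetSum _ fun j _ ↦ hL2 (i, j)).const_mul _
  have hMmean (i : ι) : μ[M i] = ℓ i := by
    rw [integral_const_mul, integral_finsetSum _ fun j _ ↦ (hL2 (i, j)).integrable one_le_two]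
    simp [hmean, n]
  have hMvar (i : ι) : Var[M i; μ] = v i / n := by
    rw [(hL.precomp (Prod.mk_right_injective i)).variance_const_mul_sum fun j ↦ hL2 (i, j)]
    simp only [one_div, inv_pow, hvar, Finset.sum_const, Finset.card_univ, nsmul_eq_mul, n]
    field_simp
  rw [hM.variance_fun_prod hM2]
  simp [hMmean, hMvar, add_comm]

theorem iIndepFun.variance_average_prod (hL : iIndepFun L μ) (hL2 : ∀ p, MemLp (L p) 2 μ)
    (hmean : ∀ p, μ[L p] = ℓ p.1) (hvar : ∀ p, Var[L p; μ] = v p.1) :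
    Var[fun ω ↦ 1 / (Fintype.card κ : ℝ) * ∑ j, ∏ i, L (i, j) ω; μ] =
      (∏ i, (ℓ i ^ 2 + v i) - ∏ i, ℓ i ^ 2) / Fintype.card κ := by
  set P : κ → Ω → ℝ := fun j ω ↦ ∏ i, L (i, j) ω
  have hLswap : iIndepFun (fun p : κ × ι ↦ L p.swap) μ := hL.precomp Prod.swap_injective
  have hP : iIndepFun P μ :=
    (hLswap.curry (aemeasurable_pi_iff.2 fun p ↦ (hL2 p.swap).aestronglyMeasurable.aemeasurable)
      ).comp (fun _ x ↦ ∏ i, x i) fun _ ↦ Finset.measurable_prod _ fun i _ ↦ measurable_pi_apply i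
  have hLj (j : κ) : iIndepFun (fun i ↦ L (i, j)) μ := hL.precomp (Prod.mk_left_injective j)
  have hP2 (j : κ) : MemLp (P j) 2 μ := (hLj j).memLp_two_fun_prod fun i ↦ hL2 (i, j)
  have hPvar (j : κ) : Var[P j; μ] = ∏ i, (ℓ i ^ 2 + v i) - ∏ i, ℓ i ^ 2 := by
    rw [(hLj j).variance_fun_prod fun i ↦ hL2 (i, j)]
    simp [hmean, hvar, add_comm]
  rw [hP.variance_const_mul_sum hP2]
  simp only [hPvar, Finset.sum_const, Finset.card_univ, nsmul_eq_mul]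
  rcases eq_or_ne (Fintype.card κ : ℝ) 0 with h | h
  · simp [h]
  · field_simp

end Estimators

end ProbabilityTheory

theorem variance_product_of_averages_lt_variance_average_of_products_general
    {Ω : Type*} [MeasurableSpace Ω] (μ : Measure Ω)
    (U R : ℕ) (hU : 2 ≤ U) (hR : 2 ≤ R)
    (L : Fin U × Fin R → Ω → ℝ) (ℓ v : Fin U → ℝ)
    (hIndep : iIndepFun L μ)
    (hL2 : ∀ p, MemLp (L p) 2 μ)
    (hmean : ∀ p, μ[L p] = ℓ p.1)
    (hvar : ∀ p, variance (L p) μ = v p.1)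
    (hv : ∀ u, 0 < v u) :
    variance (fun ω => ∏ u, ((1 / (R : ℝ)) * ∑ r, L (u, r) ω)) μ <
      variance (fun ω => (1 / (R : ℝ)) * ∑ r, ∏ u, L (u, r) ω) μ := by
  have hR₁ : (1 : ℝ) < R := by exact_mod_cast hR
  have hR₀ : (0 : ℝ) < R := by linarith
  have hU₁ : 1 < (Finset.univ : Finset (Fin U)).card := by
    rw [Finset.card_univ, Fintype.card_fin]; omega
  have : NeZero R := ⟨by omega⟩
  have hprod := hIndep.variance_prod_average hL2 hmean hvar
  have hsum := hIndep.variance_average_prod hL2 hmean hvar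
  simp only [Fintype.card_fin] at hprod hsum
  rw [hprod, hsum, lt_div_iff₀ hR₀]
  have := mul_prod_add_sub_prod_lt (fun u ↦ sq_nonneg (ℓ u)) (fun u ↦ div_pos (hv u) hR₀) hR₁ hU₁
  simp only [mul_div_cancel₀ _ hR₀.ne'] at this
  linarith

/-- If `R ≥ 2`, `U ≥ 2`, and `v(u) > 0`, `ℓ(u) > 0` for all `u`, then the estimator
`L̂ = ∏_u [(1/R) ∑_r L(u,r)]` has strictly smaller variance than the estimator
`L̃ = (1/R) ∑_r ∏_u L(u,r)`: `Var[L̂] < Var[L̃]`. -/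
theorem variance_product_of_averages_lt_variance_average_of_products
    {Ω : Type*} [MeasurableSpace Ω] (μ : Measure Ω) [IsProbabilityMeasure μ]
    (U R : ℕ) (hU : 2 ≤ U) (hR : 2 ≤ R)
    (L : Fin U × Fin R → Ω → ℝ) (ℓ v : Fin U → ℝ)
    (hIndep : iIndepFun L μ)
    (hL2 : ∀ p, MemLp (L p) 2 μ)
    (hmean : ∀ p, μ[L p] = ℓ p.1)
    (hvar : ∀ p, variance (L p) μ = v p.1)
    (hℓ : ∀ u, 0 < ℓ u) (hv : ∀ u, 0 < v u) :
    variance (fun ω => ∏ u, ((1 / (R : ℝ)) * ∑ r, L (u, r) ω)) μ <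
      variance (fun ω => (1 / (R : ℝ)) * ∑ r, ∏ u, L (u, r) ω) μ :=
  variance_product_of_averages_lt_variance_average_of_products_general μ U R hU hR L ℓ v hIndep hL2
    hmean hvar hv
end
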